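/- arXiv:1210.1425 — 2 statements merged into one kernel-verified Lean document; each statement's English description precedes it below -/
import Mathlib

section
/- (Gabriel) Let Q : A → B be an exact functor of Abelian categories admitting a right adjoint S whose counit Q ∘ S → Id_B is an isomorphism. Then the induced functor A/ker Q → B from the Serre quotient by the kernel of Q is an equivalence of categories. -/
open CategoryTheory Limits

/-- The class of morphisms of an Abelian category whose kernel and cokernel are killed by
an (exact) functor `Q`. The Serre quotient `A / ker Q` is the localization of `A` at this
class of morphisms. -/
def serreW {A B : Type*} [Category A] [Category B] [Abelian A] [HasZeroMorphisms B]
    (Q : A ⥤ B) : MorphismProperty A :=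
  fun _ _ f => IsZero (Q.obj (kernel f)) ∧ IsZero (Q.obj (cokernel f))

/-- **Gabriel.** Let `Q : A ⥤ B` be an exact functor of Abelian categories
admitting a right adjoint `S` whose counit `Q ∘ S ⟶ Id_B` is an isomorphism. Then the
induced functor `A / ker Q ⥤ B` from the Serre quotient by the kernel of `Q` is an
equivalence; equivalently, `Q` exhibits `B` as the localization of `A` at the class of
morphisms whose kernel and cokernel lie in `ker Q`. -/
theorem gabriel_serre_quotient_equivalence
    {A B : Type*} [Category A] [Category B] [Abelian A] [Abelian B]
    (Q : A ⥤ B) (S : B ⥤ A) (adj : Q ⊣ S) [IsIso adj.counit]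
    [PreservesFiniteLimits Q] [PreservesFiniteColimits Q] :
    Q.IsLocalization (serreW Q) := by
  have hS := adj.fullyFaithfulROfIsIsoCounit
  have : S.Full := hS.full
  have : S.Faithful := hS.faithful
  have h : serreW Q = (MorphismProperty.isomorphisms B).inverseImage Q := by
    ext X Y f
    constructor
    · rintro ⟨hk, hc⟩
      have : Mono (Q.map f) :=
        Preadditive.mono_of_isZero_kernel _ (hk.of_iso (PreservesKernel.iso Q f).symm)
      have : Epi (Q.map f) :=
        Preadditive.epi_of_isZero_cokernel _ (hc.of_iso (PreservesCokernel.iso Q f).symm)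
      exact isIso_of_mono_of_epi _
    · intro hf
      have : IsIso (Q.map f) := hf
      exact ⟨((isZero_zero B).of_iso (kernel.ofMono (Q.map f))).of_iso
          (PreservesKernel.iso Q f),
        ((isZero_zero B).of_iso (cokernel.ofEpi (Q.map f))).of_iso
          (PreservesCokernel.iso Q f)⟩
  rw [h]
  exact adj.isLocalization
end

section
/- Let S = k[x,y] be the standard graded polynomial ring over a field k, A the category of finitely presented graded S-modules, and C the thick subcategory of modules M with M_{≥d} = 0 for d sufficiently large. Then the quotient functor Q : A → A/C does not admit a right adjoint (section functor); i.e., C is not a localizing subcategory of A. -/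
/-!
If `Q` had a right adjoint `R`, the finitely generated module `R (Q M)`, `M = S/⟨y⟩ = k[x]`,
would vanish in all degrees below some `d`. For `c < d`, `c ≤ 0`, the inclusion
`M ⊆ x ^ c k[x]` is an isomorphism in degrees `≥ 0`, hence becomes invertible in `A/C`, and
`x ^ c k[x]` is generated in degree `c`, where `R (Q M)` vanishes. By adjunction
`End (Q M) ≃ Hom (Q (x ^ c k[x]), Q M) ≃ Hom (x ^ c k[x], R (Q M))` is a singleton, so `Q` sends
`𝟙 M` and `0` to the same morphism. But the functor of germs at `+∞`,
`M ↦ (∏ n, M n) / (eventual equality)`, factors through `A/C` and separates them.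
-/

open CategoryTheory Limits

/-- A `ℤ`-graded module over the standard graded polynomial ring `S = k[x,y]`, encoded by its
family of graded components `M n` together with the multiplication maps by the two variables
`x` and `y` (each of degree `1`), which commute with each other. -/
structure GrMod (k : Type) [Field k] where
  M : ℤ → ModuleCat k
  X : ∀ n : ℤ, M n ⟶ M (n + 1)
  Y : ∀ n : ℤ, M n ⟶ M (n + 1)
  comm : ∀ n : ℤ, X n ≫ Y (n + 1) = Y n ≫ X (n + 1)

namespace GrMod

variable {k : Type} [Field k]

/-- A degree-`0` morphism of graded `k[x,y]`-modules. -/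
@[ext]
structure Hom (M N : GrMod k) where
  f : ∀ n : ℤ, M.M n ⟶ N.M n
  commX : ∀ n : ℤ, M.X n ≫ f (n + 1) = f n ≫ N.X n
  commY : ∀ n : ℤ, M.Y n ≫ f (n + 1) = f n ≫ N.Y n

instance : Category (GrMod k) where
  Hom := Hom
  id M := ⟨fun n => 𝟙 (M.M n), by intro n; simp, by intro n; simp⟩
  comp φ ψ := ⟨fun n => φ.f n ≫ ψ.f n,
    by intro n; rw [← Category.assoc, φ.commX, Category.assoc, ψ.commX, Category.assoc],
    by intro n; rw [← Category.assoc, φ.commY, Category.assoc, ψ.commY, Category.assoc]⟩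
  id_comp φ := by apply Hom.ext; funext n; simp
  comp_id φ := by apply Hom.ext; funext n; simp
  assoc φ ψ χ := by apply Hom.ext; funext n; simp

/-- A graded `S`-submodule of a graded module: a family of `k`-subspaces closed under
multiplication by `x` and `y`. -/
structure SubFam (M : GrMod k) where
  N : ∀ n : ℤ, Submodule k (M.M n)
  mapX : ∀ n : ℤ, ∀ m ∈ N n, M.X n m ∈ N (n + 1)
  mapY : ∀ n : ℤ, ∀ m ∈ N n, M.Y n m ∈ N (n + 1)

/-- A graded module is finitely generated if finitely many homogeneous elements generate it,
i.e. the only graded submodule containing them is the whole module.  (Over the Noetherian ring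
`k[x,y]`, the finitely presented graded modules are exactly the finitely generated ones.) -/
def FG (M : GrMod k) : Prop :=
  ∃ (ι : Type) (_ : Finite ι) (g : ι → Σ n : ℤ, M.M n),
    ∀ T : SubFam M, (∀ i : ι, (g i).2 ∈ T.N (g i).1) → ∀ n : ℤ, T.N n = ⊤

/-- The class of morphisms of finitely presented graded modules whose kernel and cokernel
vanish in all sufficiently high degrees, i.e. which are isomorphisms in all sufficiently high
degrees.  The Serre quotient `A/C` of the category `A` of finitely presented graded modules by
the subcategory `C` of modules vanishing in high degrees is the localization at this class. -/
def serreW (k : Type) [Field k] : MorphismProperty (ObjectProperty.FullSubcategory (FG (k := k))) :=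
  fun _ _ φ => ∃ d : ℤ, ∀ n : ℤ, d ≤ n → Function.Bijective (φ.hom.f n)

end GrMod

open Filter

namespace GrMod

variable {k : Type} [Field k]

@[simp]
lemma Hom.f_X_apply {M N : GrMod k} (φ : M ⟶ N) {n : ℤ} (x : M.M n) :
    φ.f (n + 1) (M.X n x) = N.X n (φ.f n x) :=
  ConcreteCategory.congr_hom (φ.commX n) x

@[simp]
lemma Hom.f_Y_apply {M N : GrMod k} (φ : M ⟶ N) {n : ℤ} (x : M.M n) :
    φ.f (n + 1) (M.Y n x) = N.Y n (φ.f n x) :=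
  ConcreteCategory.congr_hom (φ.commY n) x

@[ext]
lemma hom_ext {M N : GrMod k} {φ ψ : M ⟶ N} (h : ∀ n (x : M.M n), φ.f n x = ψ.f n x) : φ = ψ :=
  Hom.ext (funext fun n => ModuleCat.hom_ext (LinearMap.ext (h n)))

instance {M N : GrMod k} : Zero (M ⟶ N) :=
  ⟨⟨fun _ => 0, by simp, by simp⟩⟩

namespace SubFam

variable {M : GrMod k}

def eqLocus {N : GrMod k} (φ ψ : M ⟶ N) : SubFam M where
  N n := LinearMap.eqLocus (φ.f n).hom (ψ.f n).hom
  mapX n x hx := by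
    change φ.f n x = ψ.f n x at hx
    change φ.f (n + 1) (M.X n x) = ψ.f (n + 1) (M.X n x)
    simp [hx]
  mapY n x hx := by
    change φ.f n x = ψ.f n x at hx
    change φ.f (n + 1) (M.Y n x) = ψ.f (n + 1) (M.Y n x)
    simp [hx]

def truncGE (M : GrMod k) (d : ℤ) : SubFam M where
  N n := if d ≤ n then ⊤ else ⊥
  mapX n x hx := by
    by_cases h : d ≤ n
    · simp [show d ≤ n + 1 by omega]
    · simp_all
  mapY n x hx := by
    by_cases h : d ≤ n
    · simp [show d ≤ n + 1 by omega]
    · simp_all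

lemma mem_truncGE_iff {d n : ℤ} {x : M.M n} : x ∈ (truncGE M d).N n ↔ d ≤ n ∨ x = 0 := by
  by_cases h : d ≤ n <;> simp [truncGE, h]

def toGrMod (T : SubFam M) : GrMod k where
  M n := ModuleCat.of k (T.N n)
  X n := ModuleCat.ofHom ((M.X n).hom.restrict (T.mapX n))
  Y n := ModuleCat.ofHom ((M.Y n).hom.restrict (T.mapY n))
  comm n := by
    ext x
    exact ConcreteCategory.congr_hom (M.comm n) (x : T.N n).1

def inclusion {T T' : SubFam M} (h : ∀ n, T.N n ≤ T'.N n) : T.toGrMod ⟶ T'.toGrMod where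
  f n := ModuleCat.ofHom (Submodule.inclusion (h n))
  commX _ := rfl
  commY _ := rfl

end SubFam

def IsGeneratedBy (M : GrMod k) {ι : Type} (g : ι → Σ n : ℤ, M.M n) : Prop :=
  ∀ T : SubFam M, (∀ i : ι, (g i).2 ∈ T.N (g i).1) → ∀ n : ℤ, T.N n = ⊤

lemma IsGeneratedBy.mem {M : GrMod k} {ι : Type} {g : ι → Σ n : ℤ, M.M n}
    (hg : M.IsGeneratedBy g) {T : SubFam M} (hT : ∀ i : ι, (g i).2 ∈ T.N (g i).1) {n : ℤ}
    (x : M.M n) : x ∈ T.N n :=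
  (hg T hT n).symm ▸ Submodule.mem_top

lemma Hom.ext_of_isGeneratedBy {M N : GrMod k} {ι : Type} {g : ι → Σ n : ℤ, M.M n}
    (hg : M.IsGeneratedBy g) {φ ψ : M ⟶ N} (h : ∀ i, φ.f _ (g i).2 = ψ.f _ (g i).2) : φ = ψ := by
  ext n x
  exact hg.mem (T := SubFam.eqLocus φ ψ) h x

lemma FG.exists_subsingleton {M : GrMod k} (hM : FG M) :
    ∃ d : ℤ, ∀ n < d, Subsingleton (M.M n) := by
  obtain ⟨ι, _, g, hg : M.IsGeneratedBy g⟩ := hM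
  obtain ⟨d, hd⟩ := (Set.finite_range fun i => (g i).1).bddBelow
  refine ⟨d, fun n hn => ⟨fun x y => ?_⟩⟩
  have hgen : ∀ i, (g i).2 ∈ (SubFam.truncGE M d).N (g i).1 :=
    fun i => SubFam.mem_truncGE_iff.2 (Or.inl (hd ⟨i, rfl⟩))
  have hx := SubFam.mem_truncGE_iff.1 (hg.mem hgen x)
  have hy := SubFam.mem_truncGE_iff.1 (hg.mem hgen y)
  rw [hx.resolve_left hn.not_ge, hy.resolve_left hn.not_ge]

/-- `k[x, x⁻¹]`, with `y` acting by `0`. -/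
abbrev laurent : GrMod k where
  M _ := ModuleCat.of k k
  X _ := 𝟙 _
  Y _ := 0
  comm _ := by simp

/-- `x ^ c k[x] ⊆ k[x, x⁻¹]`, i.e. `S/⟨y⟩` generated in degree `c`. -/
def quotY (c : ℤ) : GrMod k := (SubFam.truncGE laurent c).toGrMod

lemma mem_quotY_iff {c n : ℤ} {a : k} : a ∈ (SubFam.truncGE laurent c).N n ↔ c ≤ n ∨ a = 0 :=
  SubFam.mem_truncGE_iff

def quotY.gen (c : ℤ) : (quotY (k := k) c).M c := ⟨(1 : k), mem_quotY_iff.2 (Or.inl le_rfl)⟩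

lemma quotY_isGeneratedBy (c : ℤ) :
    (quotY (k := k) c).IsGeneratedBy (fun _ : Unit => ⟨c, quotY.gen c⟩) := by
  intro T hT n
  have hpow : ∀ m (hm : c ≤ m), ⟨(1 : k), mem_quotY_iff.2 (Or.inl hm)⟩ ∈ T.N m := by
    intro m hm
    induction m, hm using Int.leInduction with
    | base => exact hT ()
    | succ m hm ih => exact T.mapX m _ ih
  rw [Submodule.eq_top_iff']
  rintro ⟨a, ha⟩
  rcases mem_quotY_iff.1 ha with hn | rfl
  · have hx : (⟨a, ha⟩ : (quotY c).M n) = a • ⟨(1 : k), mem_quotY_iff.2 (Or.inl hn)⟩ :=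
      Subtype.ext (mul_one a).symm
    exact hx ▸ (T.N n).smul_mem a (hpow n hn)
  · exact (T.N n).zero_mem

lemma quotY_fg (c : ℤ) : FG (quotY (k := k) c) :=
  ⟨Unit, inferInstance, _, quotY_isGeneratedBy c⟩

lemma subsingleton_quotY_hom {c : ℤ} {W : GrMod k} (hW : Subsingleton (W.M c)) :
    Subsingleton (quotY c ⟶ W) :=
  ⟨fun _ _ => Hom.ext_of_isGeneratedBy (quotY_isGeneratedBy c) fun _ => Subsingleton.elim _ _⟩

lemma nontrivial_quotY {c n : ℤ} (hn : c ≤ n) : Nontrivial ((quotY (k := k) c).M n) :=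
  ⟨⟨⟨(1 : k), mem_quotY_iff.2 (Or.inl hn)⟩, 0, fun h => one_ne_zero (congrArg Subtype.val h)⟩⟩

def quotY.incl {c c' : ℤ} (h : c' ≤ c) : quotY (k := k) c ⟶ quotY c' :=
  SubFam.inclusion fun _ _ ha => mem_quotY_iff.2 ((mem_quotY_iff.1 ha).imp_left h.trans)

lemma quotY.incl_bijective {c c' n : ℤ} (h : c' ≤ c) (hn : c ≤ n) :
    Function.Bijective ((quotY.incl (k := k) h).f n) := by
  refine ⟨fun _ _ hxy => Subtype.ext (congrArg Subtype.val hxy :), fun ⟨a, _⟩ => ?_⟩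
  exact ⟨⟨a, mem_quotY_iff.2 (Or.inl hn)⟩, rfl⟩

section Germ

def germSetoid (M : GrMod k) : Setoid (∀ n, M.M n) where
  r f g := ∀ᶠ n in atTop, f n = g n
  iseqv :=
    ⟨fun _ => Eventually.of_forall fun _ => rfl, fun h => h.mono fun _ => Eq.symm,
      fun h h' => (h.and h').mono fun _ hn => hn.1.trans hn.2⟩

def germFunctor : GrMod k ⥤ Type where
  obj M := Quotient (germSetoid M)
  map φ := TypeCat.ofHom <| Quotient.map (fun f n => φ.f n (f n)) fun _ _ h =>
    h.mono fun _ hn => congrArg _ hn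
  map_id _ := by ext ⟨f⟩; rfl
  map_comp _ _ := by ext ⟨f⟩; rfl

lemma germFunctor_map_bijective {M N : GrMod k} {φ : M ⟶ N}
    (hφ : ∀ᶠ n in atTop, Function.Bijective (φ.f n)) :
    Function.Bijective (germFunctor.map φ) := by
  classical
  constructor
  · rintro ⟨f⟩ ⟨g⟩ h
    have h' : ∀ᶠ n in atTop, φ.f n (f n) = φ.f n (g n) := Quotient.exact h
    exact Quotient.sound ((h'.and hφ).mono fun n hn => hn.2.1 hn.1)
  · rintro ⟨g⟩
    let f n : M.M n := if h : Function.Bijective (φ.f n) then Function.surjInv h.2 (g n) else 0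
    refine ⟨⟦f⟧, Quotient.sound (hφ.mono fun n hn => ?_)⟩
    simp only [f, dif_pos hn, Function.surjInv_eq hn.2]

lemma germFunctor_map_id_ne_zero {M : GrMod k} (hM : ∀ᶠ n in atTop, Nontrivial (M.M n)) :
    germFunctor.map (𝟙 M) ≠ germFunctor.map 0 := by
  intro h
  let f n : M.M n := Classical.epsilon (· ≠ 0)
  have hf : ∀ᶠ n in atTop, f n ≠ 0 := hM.mono fun _ _ => Classical.epsilon_spec (exists_ne 0)
  have hf' : ∀ᶠ n in atTop, f n = 0 := Quotient.exact (types_congr_hom h ⟦f⟧)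
  obtain ⟨n, hn, hn'⟩ := (hf.and hf').exists
  exact hn hn'

end Germ

lemma serreW_isInvertedBy_germFunctor :
    (serreW k).IsInvertedBy ((ObjectProperty.ι FG) ⋙ germFunctor) := by
  rintro _ _ φ ⟨d, hd⟩
  exact (isIso_iff_bijective _).2 (germFunctor_map_bijective (eventually_atTop.2 ⟨d, hd⟩))

end GrMod

lemma CategoryTheory.MorphismProperty.IsInvertedBy.map_eq_of_Q_map_eq {C D : Type*} [Category C]
    [Category D] {W : MorphismProperty C} {F : C ⥤ D} (hF : W.IsInvertedBy F) {X Y : C}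
    {f g : X ⟶ Y} (h : W.Q.map f = W.Q.map g) : F.map f = F.map g := by
  have e := eqToIso (Localization.Construction.fac F hF)
  rw [← NatIso.naturality_2 e.symm f, ← NatIso.naturality_2 e.symm g, Functor.comp_map,
    Functor.comp_map, h]

/-- Let `S = k[x,y]` be the standard graded polynomial ring over a field
`k`, `A` the category of finitely presented graded `S`-modules and `C` the thick subcategory
of modules vanishing in all sufficiently high degrees.  Then the quotient functor
`Q : A ⥤ A/C` onto the Serre quotient (the localization of `A` at the morphisms with kernel
and cokernel in `C`) admits no right adjoint (section functor); i.e. `C` is not a localizing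
subcategory of `A`. -/
theorem no_section_functor (k : Type) [Field k] :
    ¬ ∃ S : (GrMod.serreW k).Localization ⥤ ObjectProperty.FullSubcategory (GrMod.FG (k := k)),
        Nonempty ((GrMod.serreW k).Q ⊣ S) := by
  rintro ⟨S, ⟨adj⟩⟩
  let Q := (GrMod.serreW k).Q
  let A (c : ℤ) : ObjectProperty.FullSubcategory (GrMod.FG (k := k)) :=
    ⟨GrMod.quotY c, GrMod.quotY_fg c⟩
  obtain ⟨d, hd⟩ := (S.obj (Q.obj (A 0))).property.exists_subsingleton
  set c := min (d - 1) 0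
  have hc : c ≤ 0 := min_le_right _ _
  let ι : A 0 ⟶ A c := ObjectProperty.homMk (GrMod.quotY.incl hc)
  have : IsIso (Q.map ι) :=
    (GrMod.serreW k).Q_inverts ι ⟨0, fun _ hn => GrMod.quotY.incl_bijective hc hn⟩
  have hHom : Subsingleton (Q.obj (A c) ⟶ Q.obj (A 0)) :=
    (adj.homEquiv _ _).subsingleton_congr.2 <|
      (ObjectProperty.fullyFaithfulι _).homEquiv.subsingleton_congr.2 <|
        GrMod.subsingleton_quotY_hom (hd c (by omega))
  have hEnd : Subsingleton (Q.obj (A 0) ⟶ Q.obj (A 0)) :=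
    ((asIso (Q.map ι)).homCongr (Iso.refl _)).subsingleton_congr.2 hHom
  have hQ : Q.map (𝟙 (A 0)) = Q.map (ObjectProperty.homMk 0) := Subsingleton.elim _ _
  exact GrMod.germFunctor_map_id_ne_zero
    (eventually_atTop.2 ⟨0, fun _ hn => GrMod.nontrivial_quotY hn⟩)
    (GrMod.serreW_isInvertedBy_germFunctor.map_eq_of_Q_map_eq hQ)
end
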